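/- arXiv:2002.00103 — 3 statements merged into one kernel-verified Lean document; each statement's English description precedes it below -/
import Mathlib

section
/- Let U_0, U_1 : ℝ → ℝ be continuous and strictly increasing, y_0, y_1 ∈ ℝ, and let p, p' ∈ ℝ with p' < p be two prices for option 1 (option 0 has no price). Define B ≥ 0 as the unique solution of max(U_0(y_0), U_1(y_1 - p)) = max(U_0(y_0 - B), U_1(y_1 - p' - B)). Then B = ∫_{p'}^{p} 1{U_1(y_1 - t) > U_0(y_0)} dt, i.e., the willingness to pay equals the integral over [p', p] of the indicator that option 1 is strictly preferred to option 0 at price t. -/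
open intervalIntegral MeasureTheory

lemma aux_int_lt {a b c : ℝ} (h : c ∈ Set.Icc a b) :
    (∫ t in a..b, (if t < c then (1 : ℝ) else 0)) = c - a := by
  have h0 : ∀ᵐ x ∂(volume : MeasureTheory.Measure ℝ), x ≠ c := by
    refine MeasureTheory.ae_iff.mpr ?_
    simp [measure_singleton]
  have hae : ∀ᵐ x ∂(volume : MeasureTheory.Measure ℝ),
      (if x < c then (1 : ℝ) else 0) = Set.indicator {x | x ≤ c} (fun _ => (1 : ℝ)) x := by
    filter_upwards [h0] with x hx
    by_cases hxc : x < c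
    · simp [Set.indicator, hxc, le_of_lt hxc]
    · have hle : ¬ x ≤ c := fun hle => hxc (lt_of_le_of_ne hle hx)
      simp [Set.indicator, hxc, hle]
  calc (∫ t in a..b, (if t < c then (1 : ℝ) else 0))
      = ∫ t in a..b, Set.indicator {x | x ≤ c} (fun _ => (1 : ℝ)) t :=
        integral_congr_ae (hae.mono fun x hx _ => hx)
    _ = ∫ _ in a..c, (1 : ℝ) := integral_indicator h
    _ = c - a := by simp

/-- Individual-level Bhattacharya formula: the willingness to pay for a price
decrease from p to p' equals the integral over [p', p] of the indicator that
the priced option is strictly preferred to the outside option. -/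
theorem stmt3 (U0 U1 : ℝ → ℝ) (h0c : Continuous U0) (h0s : StrictMono U0)
    (h1c : Continuous U1) (h1s : StrictMono U1) (y0 y1 p p' B : ℝ) (hp : p' < p)
    (hB0 : 0 ≤ B)
    (hB : max (U0 y0) (U1 (y1 - p)) = max (U0 (y0 - B)) (U1 (y1 - p' - B))) :
    B = ∫ t in p'..p, (if U0 y0 < U1 (y1 - t) then (1 : ℝ) else 0) := by
  set g : ℝ → ℝ := fun b => max (U0 (y0 - b)) (U1 (y1 - p' - b)) with hgdef
  have hganti : StrictAnti g := by
    intro a b hab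
    exact max_lt_max (h0s (by linarith)) (h1s (by linarith))
  have huIcc : Set.uIcc p' p = Set.Icc p' p := Set.uIcc_of_le hp.le
  rcases le_or_gt (U1 (y1 - p')) (U0 y0) with hA | hA
  · -- option 1 never strictly preferred: B = 0
    have hval : g 0 = max (U0 y0) (U1 (y1 - p)) := by
      have h1 : U1 (y1 - p) ≤ U0 y0 := le_trans (h1s (by linarith)).le hA
      simp only [hgdef, sub_zero]
      rw [max_eq_left hA, max_eq_left h1]
    have hBeq : B = 0 := hganti.injective (hval.trans hB).symm
    have hint : (∫ t in p'..p, (if U0 y0 < U1 (y1 - t) then (1 : ℝ) else 0)) = 0 := by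
      rw [integral_congr (g := fun _ => (0 : ℝ)) ?_]
      · simp
      intro t ht
      rw [huIcc] at ht
      have : U1 (y1 - t) ≤ U0 y0 := le_trans (h1s.monotone (by linarith [ht.1])) hA
      simp [not_lt.mpr this]
    rw [hBeq, hint]
  rcases lt_or_ge (U0 y0) (U1 (y1 - p)) with hC | hC
  · -- option 1 always strictly preferred: B = p - p'
    have hval : g (p - p') = max (U0 y0) (U1 (y1 - p)) := by
      have h1 : U0 (y0 - (p - p')) ≤ U1 (y1 - p) :=
        le_trans (h0s (by linarith)).le hC.le
      have h2 : U0 y0 ≤ U1 (y1 - p) := hC.le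
      simp only [hgdef]
      rw [show y1 - p' - (p - p') = y1 - p by ring, max_eq_right h1, max_eq_right h2]
    have hBeq : B = p - p' := hganti.injective (hval.trans hB).symm
    have hint : (∫ t in p'..p, (if U0 y0 < U1 (y1 - t) then (1 : ℝ) else 0)) = p - p' := by
      rw [integral_congr (g := fun _ => (1 : ℝ)) ?_]
      · simp
      intro t ht
      rw [huIcc] at ht
      have : U0 y0 < U1 (y1 - t) := lt_of_lt_of_le hC (h1s.monotone (by linarith [ht.2]))
      simp [this]
    rw [hBeq, hint]
  · -- threshold case
    obtain ⟨c, hc, hceq⟩ : ∃ c ∈ Set.Icc p' p, U1 (y1 - c) = U0 y0 := by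
      have hcont : ContinuousOn (fun t => U1 (y1 - t)) (Set.Icc p' p) :=
        (h1c.comp (continuous_const.sub continuous_id)).continuousOn
      have := intermediate_value_Icc' hp.le hcont
      have hmem : U0 y0 ∈ Set.Icc (U1 (y1 - p)) (U1 (y1 - p')) := ⟨hC, hA.le⟩
      obtain ⟨c, hc1, hc2⟩ := this hmem
      exact ⟨c, hc1, hc2⟩
    have hcp' : p' < c := by
      rcases lt_or_eq_of_le hc.1 with h | h
      · exact h
      · rw [h] at hA
        linarith
    have hval : g (c - p') = max (U0 y0) (U1 (y1 - p)) := by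
      have h1 : U0 (y0 - (c - p')) ≤ U0 y0 := (h0s (by linarith)).le
      have h2 : U1 (y1 - p) ≤ U0 y0 := hC
      simp only [hgdef]
      rw [show y1 - p' - (c - p') = y1 - c by ring, hceq, max_eq_right h1, max_eq_left h2]
    have hBeq : B = c - p' := hganti.injective (hval.trans hB).symm
    have hiff : ∀ t, (U0 y0 < U1 (y1 - t)) ↔ t < c := by
      intro t
      rw [← hceq, h1s.lt_iff_lt]
      constructor <;> intro h <;> linarith
    have hint : (∫ t in p'..p, (if U0 y0 < U1 (y1 - t) then (1 : ℝ) else 0))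
        = ∫ t in p'..p, (if t < c then (1 : ℝ) else 0) := by
      apply integral_congr
      intro t _
      simp only [hiff t]
    rw [hBeq, hint, aux_int_lt hc]
end

section
/- Let (Ω, F, P) be a probability space, and for each ω let U_0(ω,·), U_1(ω,·) : ℝ → ℝ be continuous strictly increasing functions and y_0(ω), y_1(ω) ∈ ℝ, all jointly measurable. Fix prices p' < p and let B(ω) solve max(U_0(ω, y_0(ω)), U_1(ω, y_1(ω) - p)) = max(U_0(ω, y_0(ω) - B(ω)), U_1(ω, y_1(ω) - p' - B(ω))). Define the demand function q(t) = P{ω : U_1(ω, y_1(ω) - t) > U_0(ω, y_0(ω))}. Then E[B] = ∫_{p'}^{p} q(t) dt. -/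
open MeasureTheory

/-- Population version of the willingness-to-pay formula: the average
compensating variation of a price decrease equals the integral of the demand
curve between the two prices. -/
theorem stmt4 {Ω : Type*} [MeasurableSpace Ω] (P : Measure Ω)
    [IsProbabilityMeasure P]
    (U0 U1 : Ω → ℝ → ℝ) (y0 y1 : Ω → ℝ) (B : Ω → ℝ)
    (hU0m : Measurable (Function.uncurry U0))
    (hU1m : Measurable (Function.uncurry U1))
    (hy0 : Measurable y0) (hy1 : Measurable y1) (hBm : Measurable B)
    (hU0c : ∀ ω, Continuous (U0 ω)) (hU0s : ∀ ω, StrictMono (U0 ω))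
    (hU1c : ∀ ω, Continuous (U1 ω)) (hU1s : ∀ ω, StrictMono (U1 ω))
    (p p' : ℝ) (hpp : p' < p)
    (hB : ∀ ω, max (U0 ω (y0 ω)) (U1 ω (y1 ω - p)) =
      max (U0 ω (y0 ω - B ω)) (U1 ω (y1 ω - p' - B ω))) :
    ∫ ω, B ω ∂P =
      ∫ t in p'..p, (P {ω | U0 ω (y0 ω) < U1 ω (y1 ω - t)}).toReal := by
  -- 0 ≤ B ω
  have hB0 : ∀ ω, 0 ≤ B ω := by
    intro ω
    by_contra h
    push_neg at h
    have h1 : U0 ω (y0 ω) < U0 ω (y0 ω - B ω) := hU0s ω (by linarith)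
    have h2 : U1 ω (y1 ω - p) < U1 ω (y1 ω - p' - B ω) := hU1s ω (by linarith)
    have := max_lt_max h1 h2
    rw [← hB ω] at this
    exact lt_irrefl _ this
  -- B ω ≤ p - p'
  have hBle : ∀ ω, B ω ≤ p - p' := by
    intro ω
    by_contra h
    push_neg at h
    have h1 : U0 ω (y0 ω - B ω) < U0 ω (y0 ω) := hU0s ω (by linarith)
    have h2 : U1 ω (y1 ω - p' - B ω) < U1 ω (y1 ω - p) := hU1s ω (by linarith)
    have := max_lt_max h1 h2
    rw [← hB ω] at this
    exact lt_irrefl _ this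
  -- Claim A
  have claimA : ∀ ω t, p' < t → t < p' + B ω → U0 ω (y0 ω) < U1 ω (y1 ω - t) := by
    intro ω t ht1 ht2
    have hBpos : 0 < B ω := by linarith
    have hR1 : U0 ω (y0 ω - B ω) < U0 ω (y0 ω) := hU0s ω (by linarith)
    have hle : U0 ω (y0 ω) ≤ max (U0 ω (y0 ω)) (U1 ω (y1 ω - p)) := le_max_left _ _
    have hmax : max (U0 ω (y0 ω - B ω)) (U1 ω (y1 ω - p' - B ω))
        = U1 ω (y1 ω - p' - B ω) := by
      rcases max_choice (U0 ω (y0 ω - B ω)) (U1 ω (y1 ω - p' - B ω)) with hc | hc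
      · exfalso
        rw [← hB ω] at hc
        linarith [le_max_left (U0 ω (y0 ω)) (U1 ω (y1 ω - p))]
      · exact hc
    have h2 : U0 ω (y0 ω) ≤ U1 ω (y1 ω - p' - B ω) := by
      rw [← hmax, ← hB ω]; exact le_max_left _ _
    have h3 : U1 ω (y1 ω - p' - B ω) < U1 ω (y1 ω - t) := hU1s ω (by linarith)
    linarith
  -- Claim B
  have claimB : ∀ ω t, t ≤ p → U0 ω (y0 ω) < U1 ω (y1 ω - t) → t ≤ p' + B ω := by
    intro ω t ht hC
    by_contra h
    push_neg at h
    have h1 : U1 ω (y1 ω - t) < U1 ω (y1 ω - p' - B ω) := hU1s ω (by linarith)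
    have h2 : U1 ω (y1 ω - p) ≤ U1 ω (y1 ω - t) := (hU1s ω).le_iff_le.mpr (by linarith)
    have h3 : U1 ω (y1 ω - p' - B ω) ≤ max (U0 ω (y0 ω - B ω)) (U1 ω (y1 ω - p' - B ω)) :=
      le_max_right _ _
    rw [← hB ω] at h3
    have h4 : max (U0 ω (y0 ω)) (U1 ω (y1 ω - p)) ≤ max (U0 ω (y0 ω)) (U1 ω (y1 ω - t)) :=
      max_le_max le_rfl h2
    have h5 : max (U0 ω (y0 ω)) (U1 ω (y1 ω - t)) < U1 ω (y1 ω - p' - B ω) :=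
      max_lt (by linarith) h1
    linarith
  -- section measure
  have hsec : ∀ ω, volume ({t | U0 ω (y0 ω) < U1 ω (y1 ω - t)} ∩ Set.Ioc p' p)
      = ENNReal.ofReal (B ω) := by
    intro ω
    have hsub1 : Set.Ioo p' (p' + B ω) ⊆ {t | U0 ω (y0 ω) < U1 ω (y1 ω - t)} ∩ Set.Ioc p' p := by
      intro t ht
      obtain ⟨h1, h2⟩ := ht
      refine ⟨claimA ω t h1 h2, h1, ?_⟩
      have := hBle ω; linarith
    have hsub2 : {t | U0 ω (y0 ω) < U1 ω (y1 ω - t)} ∩ Set.Ioc p' p ⊆ Set.Ioc p' (p' + B ω) := by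
      intro t ht
      obtain ⟨hC, h1, h2⟩ := ht
      exact ⟨h1, claimB ω t h2 hC⟩
    refine le_antisymm ?_ ?_
    · calc volume ({t | U0 ω (y0 ω) < U1 ω (y1 ω - t)} ∩ Set.Ioc p' p)
          ≤ volume (Set.Ioc p' (p' + B ω)) := measure_mono hsub2
        _ = ENNReal.ofReal (B ω) := by rw [Real.volume_Ioc]; ring_nf
    · calc ENNReal.ofReal (B ω) = volume (Set.Ioo p' (p' + B ω)) := by
            rw [Real.volume_Ioo]; ring_nf
        _ ≤ _ := measure_mono hsub1
  -- product set
  set A : Set (Ω × ℝ) := {q | U0 q.1 (y0 q.1) < U1 q.1 (y1 q.1 - q.2)} with hAdef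
  have hA : MeasurableSet A := by
    have h1 : Measurable fun q : Ω × ℝ => U0 q.1 (y0 q.1) :=
      hU0m.comp (measurable_fst.prodMk (hy0.comp measurable_fst))
    have h2 : Measurable fun q : Ω × ℝ => U1 q.1 (y1 q.1 - q.2) :=
      hU1m.comp (measurable_fst.prodMk ((hy1.comp measurable_fst).sub measurable_snd))
    exact measurableSet_lt h1 h2
  set ν : Measure ℝ := volume.restrict (Set.Ioc p' p) with hν
  have hprod1 : (P.prod ν) A = ∫⁻ ω, ENNReal.ofReal (B ω) ∂P := by
    rw [Measure.prod_apply hA]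
    congr 1
    ext ω
    have : (Prod.mk ω ⁻¹' A) = {t | U0 ω (y0 ω) < U1 ω (y1 ω - t)} := rfl
    rw [this, hν, Measure.restrict_apply' measurableSet_Ioc, hsec ω]
  have hprod2 : (P.prod ν) A = ∫⁻ t in Set.Ioc p' p, P {ω | U0 ω (y0 ω) < U1 ω (y1 ω - t)} := by
    rw [Measure.prod_apply_symm hA]; rfl
  -- LHS
  have hLHS : ∫ ω, B ω ∂P = (∫⁻ ω, ENNReal.ofReal (B ω) ∂P).toReal := by
    rw [integral_eq_lintegral_of_nonneg_ae (ae_of_all _ hB0) hBm.aestronglyMeasurable]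
  -- RHS
  have hmeas : Measurable fun t => P {ω | U0 ω (y0 ω) < U1 ω (y1 ω - t)} := by
    have := measurable_measure_prodMk_right (μ := P) hA
    exact this
  have hRHS : ∫ t in p'..p, (P {ω | U0 ω (y0 ω) < U1 ω (y1 ω - t)}).toReal
      = (∫⁻ t in Set.Ioc p' p, P {ω | U0 ω (y0 ω) < U1 ω (y1 ω - t)}).toReal := by
    rw [intervalIntegral.integral_of_le hpp.le]
    exact integral_toReal hmeas.aemeasurable
      (ae_of_all _ fun t => measure_lt_top P _)
  rw [hLHS, hRHS, ← hprod1, ← hprod2]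
end

section
/- Let f : [a,b] → ℝ be weakly decreasing with f(a) = f_a and f(b) = f_b, f_b ≤ f_a. Then for every v ∈ (f_b(b-a), f_a(b-a)) there exists such a weakly decreasing function f with ∫_a^b f = v; hence the set of attainable integrals is an interval containing (f_b(b-a), f_a(b-a)). -/
/-!
For `a ≤ c ≤ b`, the step function equal to `fa` up to `c` and to `fb` after it is weakly
decreasing with the right endpoint values, and its integral `fa * (c - a) + fb * (b - c)` is
affine in the jump location `c`. As `c` runs from `a` to `b` this sweeps out the whole interval
between the two rectangle bounds, so the intermediate value theorem places the jump.
-/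

open Set intervalIntegral

noncomputable def stepDown (c x y : ℝ) (t : ℝ) : ℝ := if t ≤ c then x else y

lemma stepDown_antitone {x y : ℝ} (c : ℝ) (hyx : y ≤ x) : Antitone (stepDown c x y) := by
  intro s t hst
  by_cases htc : t ≤ c
  · simp [stepDown, htc, hst.trans htc]
  · by_cases hsc : s ≤ c <;> simp [stepDown, htc, hsc, hyx]

lemma integral_stepDown {a b c : ℝ} (x y : ℝ) (hac : a ≤ c) (hcb : c ≤ b) :
    ∫ t in a..b, stepDown c x y t = x * (c - a) + y * (b - c) := by
  have hx : EqOn (fun _ ↦ x) (stepDown c x y) (uIoc a c) := fun t ht ↦ by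
    rw [uIoc_of_le hac] at ht
    simp [stepDown, ht.2]
  have hy : EqOn (fun _ ↦ y) (stepDown c x y) (uIoc c b) := fun t ht ↦ by
    rw [uIoc_of_le hcb] at ht
    simp [stepDown, not_le.mpr ht.1]
  rw [← integral_add_adjacent_intervals
      ((intervalIntegrable_congr hx).mp intervalIntegrable_const)
      ((intervalIntegrable_congr hy).mp intervalIntegrable_const),
    ← integral_congr_ae (.of_forall hx), ← integral_congr_ae (.of_forall hy)]
  simp [mul_comm]

lemma exists_mem_Ioo_add_mul_eq {a b x y v : ℝ} (hab : a ≤ b)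
    (hv : v ∈ Ioo (y * (b - a)) (x * (b - a))) :
    ∃ c ∈ Ioo a b, x * (c - a) + y * (b - c) = v := by
  have hcont : ContinuousOn (fun c ↦ x * (c - a) + y * (b - c)) (Icc a b) := by fun_prop
  exact intermediate_value_Ioo hab hcont (by simpa using hv)

/-- Sharpness of the nonparametric bounds on integrated demand: any value
strictly between the rectangle bounds is attained by some weakly decreasing
function with the prescribed endpoint values. -/
theorem stmt14 (a b fa fb : ℝ) (hab : a < b) (hff : fb ≤ fa) :
    ∀ v ∈ Set.Ioo (fb * (b - a)) (fa * (b - a)),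
      ∃ f : ℝ → ℝ, AntitoneOn f (Set.Icc a b) ∧ f a = fa ∧ f b = fb ∧
        (∫ t in a..b, f t) = v := by
  intro v hv
  obtain ⟨c, ⟨hac, hcb⟩, hc⟩ := exists_mem_Ioo_add_mul_eq hab.le hv
  refine ⟨stepDown c fa fb, (stepDown_antitone c hff).antitoneOn _, ?_, ?_, ?_⟩
  · simp [stepDown, hac.le]
  · simp [stepDown, not_le.mpr hcb]
  · rw [integral_stepDown fa fb hac.le hcb.le, hc]
end
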